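/- For the Lie algebra 𝔢(1,1) with basis F₁,F₂,F₃, brackets [F₁,F₂]=F₃, [F₃,F₁]=−F₂, [F₂,F₃]=0, and Lorentzian metric g₁ with g(F₁,F₁)=−1, g(F₂,F₂)=g(F₃,F₃)=1, the Ricci tensor of the left-invariant Levi-Civita connection vanishes except Rc(F₁,F₁)=−2, and the Ricci operator equals diag(2,0,0); moreover Ric = 2·Id + D where D is the derivation with D(F₁)=0, D(F₂)=−2F₂, D(F₃)=−2F₃, so g₁ is an algebraic Ricci soliton with c = 2 > 0 (a shrinking algebraic Ricci soliton). -/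
import Mathlib


noncomputable section

/-- The underlying space of the Lie algebra `𝔢(1,1)` of the group of rigid motions of
Minkowski 2-space, with basis `F₁ = oe 0`, `F₂ = oe 1`, `F₃ = oe 2`. -/
abbrev V3 : Type := Fin 3 → ℝ

def oe (i : Fin 3) : V3 := Pi.single i 1

/-- Brackets: `[F₁,F₂] = F₃`, `[F₃,F₁] = −F₂`, `[F₂,F₃] = 0`. -/
def br (x y : V3) : V3 := fun i =>
  if i = 1 then x 0 * y 2 - x 2 * y 0
  else if i = 2 then x 0 * y 1 - x 1 * y 0
  else 0

/-- The Lorentzian metric `g₁`: `g(F₁,F₁) = −1`, `g(F₂,F₂) = g(F₃,F₃) = 1`. -/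
def g1 (x y : V3) : ℝ := -(x 0 * y 0) + x 1 * y 1 + x 2 * y 2

/-- `D` is a derivation of the bracket. -/
def IsDer (D : V3 →ₗ[ℝ] V3) : Prop :=
  ∀ x y : V3, D (br x y) = br (D x) y + br x (D y)

/-- Koszul formula for the left-invariant Levi-Civita connection of `g₁`. -/
def Koszul (nab : V3 →ₗ[ℝ] V3 →ₗ[ℝ] V3) : Prop :=
  ∀ x y z : V3, 2 * g1 (nab x y) z = g1 (br x y) z - g1 (br y z) x + g1 (br z x) y

/-- Curvature tensor `R(X,Y)Z = ∇_X∇_Y Z − ∇_Y∇_X Z − ∇_{[X,Y]}Z`. -/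
def Rcurv (nab : V3 →ₗ[ℝ] V3 →ₗ[ℝ] V3) (x y z : V3) : V3 :=
  nab x (nab y z) - nab y (nab x z) - nab (br x y) z

/-- Ricci tensor `Rc(X,Y) = Σᵢ εᵢ g(R(eᵢ,X)Y, eᵢ)` over the pseudo-orthonormal basis. -/
def Rc (nab : V3 →ₗ[ℝ] V3 →ₗ[ℝ] V3) (x y : V3) : ℝ :=
  ∑ i : Fin 3, g1 (oe i) (oe i) * g1 (Rcurv nab (oe i) x y) (oe i)

/-- The values of the Levi-Civita connection on the basis. -/
def Nmat : Fin 3 → Fin 3 → V3 := fun i j =>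
  if i = 1 ∧ j = 0 then -oe 2
  else if i = 1 ∧ j = 2 then -oe 0
  else if i = 2 ∧ j = 0 then -oe 1
  else if i = 2 ∧ j = 1 then -oe 0
  else 0

/-- The values of the bracket on the basis. -/
def Bmat : Fin 3 → Fin 3 → V3 := fun i j =>
  if i = 0 ∧ j = 1 then oe 2
  else if i = 1 ∧ j = 0 then -oe 2
  else if i = 0 ∧ j = 2 then oe 1
  else if i = 2 ∧ j = 0 then -oe 1
  else 0

/-- The derivation `D`. -/
def Dmap : V3 →ₗ[ℝ] V3 where
  toFun x := fun k => if k = 0 then 0 else (-2) * x k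
  map_add' x y := by funext k; by_cases h : k = 0 <;> simp [h] <;> ring
  map_smul' c x := by funext k; by_cases h : k = 0 <;> simp [h] <;> ring

lemma g1_ext (v w : V3) (h : ∀ k, g1 v (oe k) = g1 w (oe k)) : v = w := by
  have h0 := h 0; have h1 := h 1; have h2 := h 2
  simp [g1, oe, Pi.single_apply] at h0 h1 h2
  funext k
  fin_cases k <;> simpa using ‹_›

lemma hbr (i j : Fin 3) : br (oe i) (oe j) = Bmat i j := by
  funext k
  fin_cases i <;> fin_cases j <;> fin_cases k <;>
    simp (config := { decide := true }) [br, Bmat, oe, Pi.single_apply] <;> norm_num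

theorem e11_g1_soliton (nab : V3 →ₗ[ℝ] V3 →ₗ[ℝ] V3) (hK : Koszul nab)
    (Ric : V3 →ₗ[ℝ] V3) (hRic : ∀ x y : V3, g1 (Ric x) y = Rc nab x y) :
    Rc nab (oe 0) (oe 0) = -2 ∧
    (∀ i j : Fin 3, ¬(i = 0 ∧ j = 0) → Rc nab (oe i) (oe j) = 0) ∧
    Ric (oe 0) = (2 : ℝ) • oe 0 ∧ Ric (oe 1) = 0 ∧ Ric (oe 2) = 0 ∧
    ∃ D : V3 →ₗ[ℝ] V3, IsDer D ∧
      D (oe 0) = 0 ∧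
      D (oe 1) = (-2 : ℝ) • oe 1 ∧
      D (oe 2) = (-2 : ℝ) • oe 2 ∧
      (∀ x : V3, Ric x = (2 : ℝ) • x + D x) ∧ (0:ℝ) < 2 := by
  have key : ∀ i j k : Fin 3, g1 (nab (oe i) (oe j)) (oe k) =
      (g1 (br (oe i) (oe j)) (oe k) - g1 (br (oe j) (oe k)) (oe i)
        + g1 (br (oe k) (oe i)) (oe j)) / 2 := by
    intro i j k; linarith [hK (oe i) (oe j) (oe k)]
  have hnab : ∀ i j, nab (oe i) (oe j) = Nmat i j := by
    intro i j
    apply g1_ext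
    intro k
    rw [key]
    fin_cases i <;> fin_cases j <;> fin_cases k <;>
      simp (config := { decide := true }) [Nmat, br, g1, oe, Pi.single_apply] <;> norm_num
  have hRc : ∀ a b : Fin 3, Rc nab (oe a) (oe b) = if a = 0 ∧ b = 0 then -2 else 0 := by
    intro a b
    simp only [Rc, Rcurv, Fin.sum_univ_three]
    rw [hbr, hbr, hbr]
    fin_cases a <;> fin_cases b <;>
      simp (config := { decide := true }) [hnab, Nmat, Bmat, map_neg, map_zero] <;>
      simp (config := { decide := true }) [g1, oe, Pi.single_apply] <;> norm_num
  have hR0 : Ric (oe 0) = (2 : ℝ) • oe 0 := by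
    apply g1_ext; intro k
    rw [hRic, hRc]
    fin_cases k <;> simp (config := { decide := true }) [g1, oe, Pi.single_apply] <;> norm_num
  have hR1 : Ric (oe 1) = 0 := by
    apply g1_ext; intro k
    rw [hRic, hRc]
    fin_cases k <;> simp (config := { decide := true }) [g1, oe, Pi.single_apply] <;> norm_num
  have hR2 : Ric (oe 2) = 0 := by
    apply g1_ext; intro k
    rw [hRic, hRc]
    fin_cases k <;> simp (config := { decide := true }) [g1, oe, Pi.single_apply] <;> norm_num
  have hD0 : Dmap (oe 0) = 0 := by
    funext k; fin_cases k <;> simp (config := { decide := true }) [Dmap, oe, Pi.single_apply] <;> norm_num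
  have hD1 : Dmap (oe 1) = (-2 : ℝ) • oe 1 := by
    funext k; fin_cases k <;> simp (config := { decide := true }) [Dmap, oe, Pi.single_apply] <;> norm_num
  have hD2 : Dmap (oe 2) = (-2 : ℝ) • oe 2 := by
    funext k; fin_cases k <;> simp (config := { decide := true }) [Dmap, oe, Pi.single_apply] <;> norm_num
  have hx : ∀ x : V3, x = x 0 • oe 0 + x 1 • oe 1 + x 2 • oe 2 := by
    intro x; funext k; fin_cases k <;> simp (config := { decide := true }) [oe, Pi.single_apply]
  refine ⟨by rw [hRc]; norm_num, fun i j h => by rw [hRc, if_neg h], hR0, hR1, hR2,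
    Dmap, ?_, hD0, hD1, hD2, ?_, by norm_num⟩
  · intro x y
    funext k
    fin_cases k <;> simp (config := { decide := true }) [Dmap, br] <;> ring
  · intro x
    rw [hx x]
    simp only [map_add, map_smul, hR0, hR1, hR2, hD0, hD1, hD2, smul_zero, add_zero,
      smul_add, smul_smul]
    funext k
    fin_cases k <;> simp (config := { decide := true }) [oe, Pi.single_apply] <;> ring
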